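/- Let ν₁, ν₂ be non-atomic probability measures on ℝ with finite second moments, CDFs F₁, F₂ and quantile functions F₁⁻¹, F₂⁻¹. Let T₁ = ((F₁⁻¹+F₂⁻¹)/2)∘F₁ and T₂ = ((F₁⁻¹+F₂⁻¹)/2)∘F₂. Then ∫(x - T₁(x))² dν₁(x) = ∫(x - T₂(x))² dν₂(x). -/

import Mathlib

open MeasureTheory

/-- Cumulative distribution function of a measure on `ℝ` (as a real number). -/
noncomputable def cdfR (ν : Measure ℝ) (t : ℝ) : ℝ := (ν (Set.Iic t)).toReal

/-- Quantile (generalized inverse CDF) function of a measure on `ℝ`. -/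
noncomputable def quantileFn (ν : Measure ℝ) (u : ℝ) : ℝ := sInf {t : ℝ | u ≤ cdfR ν t}

open Set Filter ProbabilityTheory
open scoped Topology

lemma cdfR_eq (ν : Measure ℝ) [IsProbabilityMeasure ν] : cdfR ν = fun t => cdf ν t := by
  funext t
  rw [cdfR, ← ofReal_cdf, ENNReal.toReal_ofReal (cdf_nonneg ν t)]

lemma cdfR_mono (ν : Measure ℝ) [IsProbabilityMeasure ν] : Monotone (cdfR ν) := by
  rw [cdfR_eq]; exact monotone_cdf ν

lemma cdfR_nonneg (ν : Measure ℝ) [IsProbabilityMeasure ν] (t : ℝ) : 0 ≤ cdfR ν t := by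
  rw [cdfR_eq]; exact cdf_nonneg ν t

lemma cdfR_le_one (ν : Measure ℝ) [IsProbabilityMeasure ν] (t : ℝ) : cdfR ν t ≤ 1 := by
  rw [cdfR_eq]; exact cdf_le_one ν t

lemma cdfR_tendsto_atBot (ν : Measure ℝ) [IsProbabilityMeasure ν] :
    Tendsto (cdfR ν) atBot (𝓝 0) := by
  rw [cdfR_eq]; exact tendsto_cdf_atBot ν

lemma cdfR_tendsto_atTop (ν : Measure ℝ) [IsProbabilityMeasure ν] :
    Tendsto (cdfR ν) atTop (𝓝 1) := by
  rw [cdfR_eq]; exact tendsto_cdf_atTop ν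

lemma measure_Iic_eq (ν : Measure ℝ) [IsProbabilityMeasure ν] (t : ℝ) :
    ν (Iic t) = ENNReal.ofReal (cdfR ν t) := by
  rw [cdfR_eq]; exact (ofReal_cdf ν t).symm

lemma cdfR_continuous (ν : Measure ℝ) [IsProbabilityMeasure ν] (h : ∀ t : ℝ, ν {t} = 0) :
    Continuous (cdfR ν) := by
  rw [cdfR_eq]
  rw [continuous_iff_continuousAt]
  intro x
  rw [(monotone_cdf ν).continuousAt_iff_leftLim_eq_rightLim, (cdf ν).rightLim_eq]
  have h1 : (cdf ν).measure {x} = 0 := by rw [measure_cdf]; exact h x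
  rw [StieltjesFunction.measure_singleton] at h1
  have h2 : Function.leftLim (cdf ν) x ≤ cdf ν x := (monotone_cdf ν).leftLim_le le_rfl
  have h3 := ENNReal.ofReal_eq_zero.mp h1
  linarith

/-- The cdf pushes a non-atomic probability measure to the uniform measure on `(0,1)`. -/
lemma map_cdfR (ν : Measure ℝ) [IsProbabilityMeasure ν] (h : ∀ t : ℝ, ν {t} = 0) :
    ν.map (cdfR ν) = volume.restrict (Ioo (0:ℝ) 1) := by
  have hc := cdfR_continuous ν h
  have hprob : IsProbabilityMeasure (ν.map (cdfR ν)) :=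
    Measure.isProbabilityMeasure_map hc.measurable.aemeasurable
  refine Measure.ext_of_Iic _ _ (fun u => ?_)
  rw [Measure.map_apply hc.measurable measurableSet_Iic,
      Measure.restrict_apply measurableSet_Iic]
  rcases le_or_gt 1 u with hu1 | hu1
  · have hS : cdfR ν ⁻¹' Iic u = univ := by
      ext x; simp only [mem_preimage, mem_Iic, mem_univ, iff_true]
      exact (cdfR_le_one ν x).trans hu1
    have hV : Iic u ∩ Ioo (0:ℝ) 1 = Ioo (0:ℝ) 1 := by
      ext y; simp only [mem_inter_iff, mem_Iic, mem_Ioo, and_iff_right_iff_imp]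
      exact fun hy => hy.2.le.trans hu1
    rw [hS, hV, measure_univ, Real.volume_Ioo]
    norm_num
  · rcases lt_or_ge u 0 with hu0 | hu0
    · have hS : cdfR ν ⁻¹' Iic u = ∅ := by
        ext x; simp only [mem_preimage, mem_Iic, mem_empty_iff_false, iff_false, not_le]
        exact hu0.trans_le (cdfR_nonneg ν x)
      have hV : Iic u ∩ Ioo (0:ℝ) 1 = ∅ := by
        ext y; simp only [mem_inter_iff, mem_Iic, mem_Ioo, mem_empty_iff_false, iff_false]
        rintro ⟨h1, h2, _⟩; linarith
      rw [hS, hV, measure_empty, measure_empty]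
    · -- 0 ≤ u < 1
      have hV : Iic u ∩ Ioo (0:ℝ) 1 = Ioc (0:ℝ) u := by
        ext y; simp only [mem_inter_iff, mem_Iic, mem_Ioo, mem_Ioc]
        constructor
        · rintro ⟨h1, h2, _⟩; exact ⟨h2, h1⟩
        · rintro ⟨h1, h2⟩; exact ⟨h2, h1, lt_of_le_of_lt h2 hu1⟩
      rw [hV, Real.volume_Ioc, sub_zero]
      set S := cdfR ν ⁻¹' Iic u with hSdef
      have hSclosed : IsClosed S := isClosed_Iic.preimage hc
      have hbdd : BddAbove S := by
        obtain ⟨b, hb⟩ := eventually_atTop.mp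
          ((cdfR_tendsto_atTop ν).eventually (eventually_gt_nhds hu1))
        exact ⟨b, fun x hx => by
          by_contra hxb
          exact absurd (hb x (le_of_not_ge hxb)) (not_lt.2 hx)⟩
      rcases eq_empty_or_nonempty S with hS | hS
      · have hu0' : u = 0 := by
          refine le_antisymm ?_ hu0
          by_contra hpos
          obtain ⟨x, hx⟩ := ((cdfR_tendsto_atBot ν).eventually
            (eventually_lt_nhds (lt_of_not_ge hpos))).exists
          have hxS : x ∈ S := hx.le
          rw [hS] at hxS
          exact hxS
        rw [hS, measure_empty, hu0', ENNReal.ofReal_zero]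
      · set a := sSup S with ha
        have haS : a ∈ S := hSclosed.csSup_mem hS hbdd
        have hFa_le : cdfR ν a ≤ u := haS
        have hFa_ge : u ≤ cdfR ν a := by
          have htend : Tendsto (cdfR ν) (𝓝[>] a) (𝓝 (cdfR ν a)) :=
            hc.continuousAt.continuousWithinAt
          refine ge_of_tendsto htend ?_
          filter_upwards [self_mem_nhdsWithin] with t ht
          by_contra hlt
          have : t ∈ S := le_of_not_ge hlt
          exact absurd (le_csSup hbdd this) (not_le.2 ht)
        have hSeq : S = Iic a := by
          ext x
          constructor
          · exact fun hx => le_csSup hbdd hx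
          · intro hx
            exact le_trans (cdfR_mono ν hx) hFa_le
        rw [hSeq, measure_Iic_eq, le_antisymm hFa_le hFa_ge]

/-- Flat parts of the cdf are null sets. -/
lemma flat_null (ν : Measure ℝ) [IsProbabilityMeasure ν] (h : ∀ t : ℝ, ν {t} = 0) (r : ℝ) :
    ν {y | r < y ∧ cdfR ν y = cdfR ν r} = 0 := by
  have hc := cdfR_continuous ν h
  set F := cdfR ν with hF
  by_cases hbdd : BddAbove {y | F y ≤ F r}
  · set T := {y | F y ≤ F r} with hT
    have hTclosed : IsClosed T := isClosed_le hc continuous_const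
    have hTne : T.Nonempty := ⟨r, by simp only [hT, Set.mem_setOf_eq]; exact le_rfl⟩
    set c := sSup T with hcdef
    have hcT : c ∈ T := hTclosed.csSup_mem hTne hbdd
    have hrc : r ≤ c := le_csSup hbdd (le_rfl : F r ≤ F r)
    have hFc : F c = F r := le_antisymm hcT (cdfR_mono ν hrc)
    have hsub : {y | r < y ∧ F y = F r} ⊆ Iic c \ Iic r := by
      rintro y ⟨hy1, hy2⟩
      exact ⟨le_csSup hbdd (le_of_eq hy2), not_le.2 hy1⟩
    refine le_antisymm (le_trans (measure_mono hsub) ?_) zero_le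
    rw [measure_diff (Iic_subset_Iic.2 hrc) nullMeasurableSet_Iic (measure_ne_top ν _),
      measure_Iic_eq, measure_Iic_eq]
    simp only [hF] at hFc
    rw [hFc, tsub_self]
  · have hFr : 1 ≤ F r := by
      by_contra hlt
      obtain ⟨b, hb⟩ := eventually_atTop.mp
        ((cdfR_tendsto_atTop ν).eventually (eventually_gt_nhds (lt_of_not_ge hlt)))
      exact hbdd ⟨b, fun y hy => by
        by_contra hyb
        exact absurd (hb y (le_of_not_ge hyb)) (not_lt.2 hy)⟩
    have hIic : ν (Iic r) = 1 := by
      rw [measure_Iic_eq]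
      refine le_antisymm (ENNReal.ofReal_le_one.mpr (cdfR_le_one ν r)) ?_
      rw [← ENNReal.ofReal_one]
      exact ENNReal.ofReal_le_ofReal hFr
    have hsub : {y | r < y ∧ F y = F r} ⊆ (Iic r)ᶜ := by
      rintro y ⟨hy1, _⟩
      exact not_le.2 hy1
    refine le_antisymm (le_trans (measure_mono hsub) ?_) zero_le
    rw [measure_compl measurableSet_Iic (measure_ne_top ν _), hIic, measure_univ, tsub_self]

/-- The quantile function is a.e. inverse to the cdf. -/
lemma ae_quantile_cdfR (ν : Measure ℝ) [IsProbabilityMeasure ν] (h : ∀ t : ℝ, ν {t} = 0) :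
    ∀ᵐ x ∂ν, quantileFn ν (cdfR ν x) = x := by
  have hc := cdfR_continuous ν h
  have hzero : ν (cdfR ν ⁻¹' Iic 0) = 0 := by
    rw [← Measure.map_apply hc.measurable measurableSet_Iic, map_cdfR ν h,
      Measure.restrict_apply measurableSet_Iic]
    have : Iic (0:ℝ) ∩ Ioo (0:ℝ) 1 = ∅ := by
      ext y; simp only [mem_inter_iff, mem_Iic, mem_Ioo, mem_empty_iff_false, iff_false]
      rintro ⟨h1, h2, _⟩; linarith
    rw [this, measure_empty]
  have hflat : ν (⋃ q : ℚ, {y | (q:ℝ) < y ∧ cdfR ν y = cdfR ν q}) = 0 :=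
    measure_iUnion_null fun q => flat_null ν h (q : ℝ)
  have hzero' : ∀ᵐ x ∂ν, ¬ (cdfR ν x ≤ 0) := by
    rw [ae_iff]; simp only [not_not]; exact hzero
  have hflat' : ∀ᵐ x ∂ν, ∀ q : ℚ, ¬ ((q:ℝ) < x ∧ cdfR ν x = cdfR ν q) := by
    rw [ae_iff]
    push_neg
    convert hflat using 2
    ext x
    simp only [mem_setOf_eq, mem_iUnion]
  filter_upwards [hzero', hflat'] with x hx0 hxq
  have hx0' : 0 < cdfR ν x := lt_of_not_ge hx0
  set S := {t : ℝ | cdfR ν x ≤ cdfR ν t} with hS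
  have hxS : x ∈ S := by simp only [hS, Set.mem_setOf_eq]; exact le_rfl
  have hbdd : BddBelow S := by
    obtain ⟨t₀, ht₀⟩ := ((cdfR_tendsto_atBot ν).eventually (eventually_lt_nhds hx0')).exists
    refine ⟨t₀, fun s hs => ?_⟩
    by_contra hst
    exact absurd (le_trans hs (cdfR_mono ν (le_of_not_ge hst))) (not_le.2 ht₀)
  have hQle : quantileFn ν (cdfR ν x) ≤ x := csInf_le hbdd hxS
  refine le_antisymm hQle ?_
  by_contra hlt
  obtain ⟨q, hq1, hq2⟩ := exists_rat_btwn (lt_of_not_ge hlt)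
  obtain ⟨t, htS, htq⟩ := exists_lt_of_csInf_lt ⟨x, hxS⟩ hq1
  have h1 : cdfR ν x ≤ cdfR ν (q:ℝ) := le_trans htS (cdfR_mono ν htq.le)
  have h2 : cdfR ν (q:ℝ) ≤ cdfR ν x := cdfR_mono ν hq2.le
  exact hxq q ⟨hq2, le_antisymm h1 h2⟩

lemma quantileFn_monoOn (ν : Measure ℝ) [IsProbabilityMeasure ν] :
    MonotoneOn (quantileFn ν) (Ioo (0:ℝ) 1) := by
  intro u hu v hv huv
  refine csInf_le_csInf ?_ ?_ ?_
  · obtain ⟨t₀, ht₀⟩ := ((cdfR_tendsto_atBot ν).eventually (eventually_lt_nhds hu.1)).exists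
    refine ⟨t₀, fun s hs => ?_⟩
    by_contra hst
    exact absurd (le_trans hs (cdfR_mono ν (le_of_not_ge hst))) (not_le.2 ht₀)
  · obtain ⟨t, ht⟩ := ((cdfR_tendsto_atTop ν).eventually (eventually_gt_nhds hv.2)).exists
    exact ⟨t, ht.le⟩
  · exact fun t ht => le_trans huv ht

theorem stmt_11 (ν₁ ν₂ : Measure ℝ) [IsProbabilityMeasure ν₁] [IsProbabilityMeasure ν₂]
    (h₁ : ∀ t : ℝ, ν₁ {t} = 0) (h₂ : ∀ t : ℝ, ν₂ {t} = 0)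
    (hm₁ : Integrable (fun t : ℝ => t ^ 2) ν₁) (hm₂ : Integrable (fun t : ℝ => t ^ 2) ν₂) :
    ∫ x, (x - (quantileFn ν₁ (cdfR ν₁ x) + quantileFn ν₂ (cdfR ν₁ x)) / 2) ^ 2 ∂ν₁ =
      ∫ x, (x - (quantileFn ν₁ (cdfR ν₂ x) + quantileFn ν₂ (cdfR ν₂ x)) / 2) ^ 2 ∂ν₂ := by
  have hc₁ := cdfR_continuous ν₁ h₁
  have hc₂ := cdfR_continuous ν₂ h₂
  set g : ℝ → ℝ := fun u => ((quantileFn ν₁ u - quantileFn ν₂ u) / 2) ^ 2 with hg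
  have hmeas : AEStronglyMeasurable g (volume.restrict (Ioo (0:ℝ) 1)) := by
    have m1 : AEMeasurable (quantileFn ν₁) (volume.restrict (Ioo (0:ℝ) 1)) :=
      aemeasurable_restrict_of_monotoneOn measurableSet_Ioo (quantileFn_monoOn ν₁)
    have m2 : AEMeasurable (quantileFn ν₂) (volume.restrict (Ioo (0:ℝ) 1)) :=
      aemeasurable_restrict_of_monotoneOn measurableSet_Ioo (quantileFn_monoOn ν₂)
    exact (((m1.sub m2).div_const 2).pow_const 2).aestronglyMeasurable
  have key₁ : ∫ x, (x - (quantileFn ν₁ (cdfR ν₁ x) + quantileFn ν₂ (cdfR ν₁ x)) / 2) ^ 2 ∂ν₁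
      = ∫ u, g u ∂(volume.restrict (Ioo (0:ℝ) 1)) := by
    have step1 : ∫ x, (x - (quantileFn ν₁ (cdfR ν₁ x) + quantileFn ν₂ (cdfR ν₁ x)) / 2) ^ 2 ∂ν₁
        = ∫ x, g (cdfR ν₁ x) ∂ν₁ := by
      refine integral_congr_ae ?_
      filter_upwards [ae_quantile_cdfR ν₁ h₁] with x hx
      set u := cdfR ν₁ x with hu
      rw [hg]
      dsimp only
      rw [← hx]
      ring
    rw [step1, ← integral_map hc₁.measurable.aemeasurable (by rw [map_cdfR ν₁ h₁]; exact hmeas),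
      map_cdfR ν₁ h₁]
  have key₂ : ∫ x, (x - (quantileFn ν₁ (cdfR ν₂ x) + quantileFn ν₂ (cdfR ν₂ x)) / 2) ^ 2 ∂ν₂
      = ∫ u, g u ∂(volume.restrict (Ioo (0:ℝ) 1)) := by
    have step1 : ∫ x, (x - (quantileFn ν₁ (cdfR ν₂ x) + quantileFn ν₂ (cdfR ν₂ x)) / 2) ^ 2 ∂ν₂
        = ∫ x, g (cdfR ν₂ x) ∂ν₂ := by
      refine integral_congr_ae ?_
      filter_upwards [ae_quantile_cdfR ν₂ h₂] with x hx
      set u := cdfR ν₂ x with hu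
      rw [hg]
      dsimp only
      rw [← hx]
      ring
    rw [step1, ← integral_map hc₂.measurable.aemeasurable (by rw [map_cdfR ν₂ h₂]; exact hmeas),
      map_cdfR ν₂ h₂]
  rw [key₁, key₂]
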